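/- Let x be an infinite word over a finite alphabet satisfying r(i,x) ≤ 2i + 1 for all i ≥ 1. Let m and n be positive integers with r(n,x) = 2n + 1 and m ≥ 2n + 1, and let k be the integer determined by r(k−1,x) < m ≤ r(k,x). Then k ≥ n and r(k,x) − k ≤ m − n. -/
import Mathlib


open Filter

/-- `rc n x` : length of the shortest prefix of the infinite word `x` containing two
(possibly overlapping) occurrences of some word of length `n`.  Here `x k` is the
`(k+1)`-st letter of the word. -/
noncomputable def rc {A : Type*} (n : ℕ) (x : ℕ → A) : ℕ :=
  sInf {m | ∃ j, j + n < m ∧ ∀ t < n, x (j + t) = x (m - n + t)}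

lemma rc_set_nonempty {A : Type*} [Fintype A] (x : ℕ → A) (n : ℕ) :
    {m | ∃ j, j + n < m ∧ ∀ t < n, x (j + t) = x (m - n + t)}.Nonempty := by
  have : ∃ a b : ℕ, a < b ∧ ∀ t < n, x (a + t) = x (b + t) := by
    obtain ⟨a, b, hne, hfe⟩ := Finite.exists_ne_map_eq_of_infinite
      (f := fun j : ℕ => fun t : Fin n => x (j + t))
    rcases hne.lt_or_gt with h | h
    · exact ⟨a, b, h, fun t ht => congrFun hfe ⟨t, ht⟩⟩
    · exact ⟨b, a, h, fun t ht => (congrFun hfe ⟨t, ht⟩).symm⟩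
  obtain ⟨a, b, hab, h⟩ := this
  exact ⟨b + n, a, by omega, fun t ht => by rw [h t ht]; congr 1; omega⟩

lemma rc_succ {A : Type*} [Fintype A] (x : ℕ → A) (n : ℕ) :
    rc n x + 1 ≤ rc (n + 1) x := by
  obtain ⟨j, hj, h⟩ : ∃ j, j + (n + 1) < rc (n + 1) x ∧
      ∀ t < n + 1, x (j + t) = x (rc (n + 1) x - (n + 1) + t) :=
    Nat.sInf_mem (rc_set_nonempty x (n + 1))
  have h1 : rc n x ≤ rc (n + 1) x - 1 := by
    apply Nat.sInf_le
    refine ⟨j, by omega, fun t ht => ?_⟩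
    have := h t (by omega)
    convert this using 2
    omega
  omega

lemma rc_le_rc {A : Type*} [Fintype A] (x : ℕ → A) {a b : ℕ} (h : a ≤ b) :
    rc a x + (b - a) ≤ rc b x := by
  induction b, h using Nat.le_induction with
  | base => simp
  | succ b hb ih => have := rc_succ x b; omega

theorem rc_between {A : Type*} [Fintype A] (x : ℕ → A)
    (hx : ∀ i ≥ 1, rc i x ≤ 2 * i + 1) (m n : ℕ) (hn : 1 ≤ n)
    (hrn : rc n x = 2 * n + 1) (hm : 2 * n + 1 ≤ m)
    (k : ℕ) (hk : 1 ≤ k) (hk1 : rc (k - 1) x < m) (hk2 : m ≤ rc k x) :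
    n ≤ k ∧ rc k x - k ≤ m - n := by
  have hkn : n ≤ k := by
    by_contra h
    have := hx k hk
    omega
  refine ⟨hkn, ?_⟩
  have h2 : rc k x ≤ 2 * k + 1 := hx k hk
  rcases eq_or_lt_of_le hkn with heq | hlt
  · omega
  · have h3 : rc n x + (k - 1 - n) ≤ rc (k - 1) x := rc_le_rc x (by omega)
    omega
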